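/- arXiv:1311.6155 — 9 statements merged into one kernel-verified Lean document; each statement's English description precedes it below -/
import Mathlib

section
/- Let R be an integral domain, p a prime ideal of R, and φ ∈ R with φ ∉ p. Then the localization R_φ (at powers of φ) equals the localization R_p (as subrings of the fraction field of R) if and only if φ belongs to every prime ideal q of R such that q is not contained in p. -/
/-!
Writing `x = a / b` with `b ∉ p`, the element `x` lies in `R_φ` as soon as `b` divides a
power of `φ`; conversely `1 / b ∈ R_φ` forces `b ∣ φ ^ n`. So `R_p = R_φ` says that every
`b ∉ p` divides a power of `φ`, i.e. `φ` lies in the radical of each ideal `(b)` with `b ∉ p`.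
Since the radical is the intersection of the primes containing it, and a prime containing some
`b ∉ p` is exactly a prime not contained in `p`, this is the stated condition.
-/

namespace Ideal

variable {R : Type*} [CommRing R]

theorem forall_mem_of_not_le_iff_forall_dvd_pow (p : Ideal R) (φ : R) :
    (∀ q : Ideal R, q.IsPrime → ¬ q ≤ p → φ ∈ q) ↔
      ∀ b ∉ p, ∃ n : ℕ, b ∣ φ ^ n := by
  constructor
  · intro h b hb
    have hφ : φ ∈ (span {b}).radical := by
      rw [radical_eq_sInf, mem_sInf]
      rintro q ⟨hbq, hq⟩
      exact h q hq fun hqp => hb (hqp (span_singleton_le_iff_mem q |>.mp hbq))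
    obtain ⟨n, hn⟩ := mem_radical_iff.mp hφ
    exact ⟨n, mem_span_singleton.mp hn⟩
  · intro h q hq hqp
    obtain ⟨b, hbq, hbp⟩ := SetLike.not_le_iff_exists.mp hqp
    obtain ⟨n, hdvd⟩ := h b hbp
    exact hq.mem_of_pow_mem n (mem_of_dvd _ hdvd hbq)

end Ideal

section FractionsWithDenominators

variable {R : Type*} (K : Type*) [CommRing R] [CommRing K] [Algebra R K]

/-- The subring `M⁻¹R` of `K`; `R_φ` and `R_p` are the cases `M = powers φ` and
`M = p.primeCompl`. -/
def fractionsWithDenominators (M : Submonoid R) : Set K :=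
  {x | ∃ a : R, ∃ s ∈ M, x * algebraMap R K s = algebraMap R K a}

variable {K}

theorem fractionsWithDenominators_mono {M N : Submonoid R} (h : M ≤ N) :
    fractionsWithDenominators K M ⊆ fractionsWithDenominators K N := by
  rintro x ⟨a, s, hs, hx⟩
  exact ⟨a, s, h hs, hx⟩

theorem fractionsWithDenominators_subset_iff [IsFractionRing R K] {M N : Submonoid R}
    (hM : M ≤ nonZeroDivisors R) :
    fractionsWithDenominators K M ⊆ fractionsWithDenominators K N ↔
      ∀ b ∈ M, ∃ c ∈ N, b ∣ c := by
  constructor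
  · intro h b hb
    have hunit : IsUnit (algebraMap R K b) :=
      IsLocalization.map_units K (⟨b, hM hb⟩ : nonZeroDivisors R)
    obtain ⟨a, c, hc, hac⟩ := h ⟨1, b, hb, by rw [map_one, hunit.val_inv_mul]⟩
    refine ⟨c, hc, a, IsFractionRing.injective R K ?_⟩
    rw [map_mul, ← hac, ← mul_assoc, hunit.mul_val_inv, one_mul]
  · rintro h x ⟨a, b, hb, hx⟩
    obtain ⟨c, hc, d, rfl⟩ := h b hb
    exact ⟨a * d, b * d, hc, by rw [map_mul, map_mul, ← mul_assoc, hx]⟩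

end FractionsWithDenominators

theorem stmt_2 {R K : Type*} [CommRing R] [IsDomain R] [Field K] [Algebra R K]
    [IsFractionRing R K] (p : Ideal R) [p.IsPrime] (φ : R) (hφ : φ ∉ p) :
    {x : K | ∃ (a : R) (n : ℕ), x * algebraMap R K (φ ^ n) = algebraMap R K a} =
      {x : K | ∃ (a b : R), b ∉ p ∧ x * algebraMap R K b = algebraMap R K a} ↔
    ∀ q : Ideal R, q.IsPrime → ¬ q ≤ p → φ ∈ q := by
  have hpowers : {x : K | ∃ (a : R) (n : ℕ), x * algebraMap R K (φ ^ n) = algebraMap R K a} =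
      fractionsWithDenominators K (Submonoid.powers φ) := by
    ext x
    simp [fractionsWithDenominators, Submonoid.mem_powers_iff]
  have hcompl : {x : K | ∃ (a b : R), b ∉ p ∧ x * algebraMap R K b = algebraMap R K a} =
      fractionsWithDenominators K p.primeCompl := by
    ext x
    simp [fractionsWithDenominators, Ideal.primeCompl]
  have hle : Submonoid.powers φ ≤ p.primeCompl := Submonoid.powers_le.mpr hφ
  rw [hpowers, hcompl, Set.Subset.antisymm_iff,
    and_iff_right (fractionsWithDenominators_mono hle),
    fractionsWithDenominators_subset_iff (Ideal.primeCompl_le_nonZeroDivisors p),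
    Ideal.forall_mem_of_not_le_iff_forall_dvd_pow]
  simp [Ideal.primeCompl, Submonoid.mem_powers_iff]
end

section
/- Let m be a maximal ideal of an integral domain R. If S is a local ring with R ⊆ S ⊆ R_m (as subrings of the fraction field of R), then S = R_m. -/
/-!
Every element of `m` stays a non-unit in `S`, since `S ⊆ R_m` and a fraction `a / b ∈ R_m`
with `b ∉ m` cannot invert `c ∈ m` (it would force `b = a c ∈ m`). Hence the maximal ideal of
the local ring `S` contracts to an ideal of `R` containing `m`, which is proper and so equals `m`.
Thus every `b ∉ m` is a unit of `S`, and `a / b ∈ S` for all fractions of `R_m`.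
-/

section

variable {R K : Type*} [CommRing R] [Field K] [Algebra R K] {m : Ideal R} {S : Subring K}

theorem not_isUnit_codRestrict_of_mem [IsFractionRing R K] (hRS : ∀ r : R, algebraMap R K r ∈ S)
    (hSm : (S : Set K) ⊆
      {x : K | ∃ (a b : R), b ∉ m ∧ x * algebraMap R K b = algebraMap R K a})
    {c : R} (hc : c ∈ m) : ¬IsUnit ((algebraMap R K).codRestrict S hRS c) := by
  rintro ⟨u, hu⟩
  obtain ⟨a, b, hb, hab⟩ := hSm (u⁻¹ : Sˣ).1.2
  have hinv : ((u⁻¹ : Sˣ) : K) * algebraMap R K c = 1 := by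
    rw [show algebraMap R K c = (u : K) from congrArg Subtype.val hu.symm]
    exact congrArg Subtype.val u.inv_mul
  have hbac : algebraMap R K b = algebraMap R K (a * c) := by
    rw [map_mul, ← hab, mul_right_comm, hinv, one_mul]
  exact hb (IsFractionRing.injective R K hbac ▸ m.mul_mem_left a hc)

theorem comap_maximalIdeal_codRestrict_eq [IsFractionRing R K] [IsLocalRing S]
    (hm : m.IsMaximal) (hRS : ∀ r : R, algebraMap R K r ∈ S)
    (hSm : (S : Set K) ⊆
      {x : K | ∃ (a b : R), b ∉ m ∧ x * algebraMap R K b = algebraMap R K a}) :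
    (IsLocalRing.maximalIdeal S).comap ((algebraMap R K).codRestrict S hRS) = m :=
  (hm.eq_of_le (Ideal.comap_isPrime _ _).ne_top
    fun _ hc => Ideal.mem_comap.mpr <| (IsLocalRing.mem_maximalIdeal _).mpr
      (not_isUnit_codRestrict_of_mem hRS hSm hc)).symm

theorem isUnit_codRestrict_of_notMem [IsFractionRing R K] [IsLocalRing S]
    (hm : m.IsMaximal) (hRS : ∀ r : R, algebraMap R K r ∈ S)
    (hSm : (S : Set K) ⊆
      {x : K | ∃ (a b : R), b ∉ m ∧ x * algebraMap R K b = algebraMap R K a})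
    {b : R} (hb : b ∉ m) : IsUnit ((algebraMap R K).codRestrict S hRS b) := by
  by_contra hnu
  exact hb <| comap_maximalIdeal_codRestrict_eq hm hRS hSm ▸
    (IsLocalRing.mem_maximalIdeal _).mpr hnu

end

theorem stmt_3_general {R K : Type*} [CommRing R] [Field K] [Algebra R K]
    [IsFractionRing R K] (m : Ideal R) (hm : m.IsMaximal) (S : Subring K)
    [IsLocalRing S]
    (hRS : ∀ r : R, algebraMap R K r ∈ S)
    (hSm : (S : Set K) ⊆
      {x : K | ∃ (a b : R), b ∉ m ∧ x * algebraMap R K b = algebraMap R K a}) :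
    (S : Set K) =
      {x : K | ∃ (a b : R), b ∉ m ∧ x * algebraMap R K b = algebraMap R K a} := by
  refine hSm.antisymm ?_
  rintro x ⟨a, b, hb, hab⟩
  obtain ⟨v, hv⟩ := isUnit_codRestrict_of_notMem hm hRS hSm hb
  have hx : x = algebraMap R K a * ((v⁻¹ : Sˣ) : K) := by
    have hvb : algebraMap R K b * ((v⁻¹ : Sˣ) : K) = 1 := by
      rw [show algebraMap R K b = (v : K) from congrArg Subtype.val hv.symm]
      exact congrArg Subtype.val v.mul_inv
    rw [← hab, mul_assoc, hvb, mul_one]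
  exact hx ▸ S.mul_mem (hRS a) (v⁻¹ : Sˣ).1.2

theorem stmt_3 {R K : Type*} [CommRing R] [IsDomain R] [Field K] [Algebra R K]
    [IsFractionRing R K] (m : Ideal R) (hm : m.IsMaximal) (S : Subring K)
    [IsLocalRing S]
    (hRS : ∀ r : R, algebraMap R K r ∈ S)
    (hSm : (S : Set K) ⊆
      {x : K | ∃ (a b : R), b ∉ m ∧ x * algebraMap R K b = algebraMap R K a}) :
    (S : Set K) =
      {x : K | ∃ (a b : R), b ∉ m ∧ x * algebraMap R K b = algebraMap R K a} :=
  stmt_3_general m hm S hRS hSm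
end

section
/- Let R be an integrally closed domain with fraction field L, let F|L be a finite separable field extension, and let R* be the integral closure of R in F. If x ∈ R* satisfies F = L(x), then the minimal polynomial f(X) of x over L has coefficients in R, and R* ⊆ f'(x)^{-1} R[x], i.e., for every b ∈ R*, b·f'(x) ∈ R[x]. -/
/-!
Since `R` is integrally closed, the minimal polynomial of an `R`-integral element over `L` is the
image of its minimal polynomial over `R`. For the second part, an integral `b` pairs integrally
under the trace form with every element of `R[x]`, so `b` lies in the trace dual of `R[x]`; by
Euler's lemma this dual is `f'(x)⁻¹ R[x]`, and `f'(x) ≠ 0` by separability.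
-/

open Polynomial

theorem coeff_minpoly_mem_range_of_isIntegral {R K S : Type*} [CommRing R] [IsDomain R]
    [IsIntegrallyClosed R] [Field K] [Algebra R K] [IsFractionRing R K]
    [CommRing S] [IsDomain S] [Algebra R S] [Algebra K S] [IsScalarTower R K S]
    {x : S} (hx : IsIntegral R x) (n : ℕ) :
    (minpoly K x).coeff n ∈ (algebraMap R K).range := by
  rw [minpoly.isIntegrallyClosed_eq_field_fractions' K hx, coeff_map]
  exact ⟨_, rfl⟩

theorem mem_traceForm_dualSubmodule_of_le_integralClosure {R L F : Type*} [CommRing R]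
    [IsIntegrallyClosed R] [Field L] [Algebra R L] [IsFractionRing R L]
    [Field F] [Algebra L F] [Algebra R F] [IsScalarTower R L F] [FiniteDimensional L F]
    {S : Subalgebra R F} (hS : S ≤ integralClosure R F) {b : F} (hb : IsIntegral R b) :
    b ∈ (Algebra.traceForm L F).dualSubmodule (Subalgebra.toSubmodule S) := fun _ hy ↦
  Submodule.mem_one.mpr <| IsIntegrallyClosed.isIntegral_iff.mp <|
    Algebra.isIntegral_trace (hb.mul (hS hy))

theorem stmt_4 {R L F : Type*} [CommRing R] [IsDomain R] [IsIntegrallyClosed R]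
    [Field L] [Algebra R L] [IsFractionRing R L]
    [Field F] [Algebra L F] [Algebra R F] [IsScalarTower R L F]
    [FiniteDimensional L F] [Algebra.IsSeparable L F]
    (x : F) (hx : x ∈ integralClosure R F)
    (hgen : Algebra.adjoin L {x} = ⊤) :
    (∀ n : ℕ, (minpoly L x).coeff n ∈ (algebraMap R L).range) ∧
    ∀ b ∈ integralClosure R F,
      b * (Polynomial.aeval x) (Polynomial.derivative (minpoly L x)) ∈
        Algebra.adjoin R {x} := by
  refine ⟨coeff_minpoly_mem_range_of_isIntegral hx, fun b hb ↦ ?_⟩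
  have hf' : aeval x (derivative (minpoly L x)) ≠ 0 :=
    (Algebra.IsSeparable.isSeparable L x).aeval_derivative_ne_zero (minpoly.aeval L x)
  have hdual := mem_traceForm_dualSubmodule_of_le_integralClosure (L := L)
    (Algebra.adjoin_le (Set.singleton_subset_iff.mpr hx)) hb
  rw [traceForm_dualSubmodule_adjoin R L hgen hx,
    Submodule.mem_smul_iff_inv_mul_mem (inv_ne_zero hf'), inv_inv, mul_comm] at hdual
  exact hdual
end

section
/- Let R be a valuation ring of a field L, F|L a finite Galois extension, and R* the integral closure of R in F. Then R* has only finitely many maximal ideals. -/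
/-!
Every maximal ideal of `R*` lies over the maximal ideal of the local ring `R`, because `R*` is
integral over `R`. The Galois group acts on `R*` with invariants `R` (since `R` is integrally
closed), so it permutes the primes over a given prime of `R` transitively; hence there are at
most `[F : L]` of them.
-/

theorem Algebra.IsInvariant.finite_primesOver (A B : Type*) [CommRing A] [CommRing B]
    [Algebra A B] (G : Type*) [Group G] [Finite G] [MulSemiringAction G B]
    [SMulCommClass G A B] [Algebra.IsInvariant A B G] (p : Ideal A) :
    (p.primesOver B).Finite := by
  rcases (p.primesOver B).eq_empty_or_nonempty with h | ⟨Q, _, _⟩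
  · simp [h]
  · rw [← orbit_eq_primesOver A B G p Q]
    exact Set.finite_range _

theorem Algebra.IsInvariant.finite_setOf_isMaximal (A B : Type*) [CommRing A] [IsLocalRing A]
    [CommRing B] [Algebra A B] (G : Type*) [Group G] [Finite G] [MulSemiringAction G B]
    [SMulCommClass G A B] [Algebra.IsInvariant A B G] :
    {m : Ideal B | m.IsMaximal}.Finite := by
  have := isIntegral A B G
  refine (finite_primesOver A B G (IsLocalRing.maximalIdeal A)).subset fun m hm ↦ ?_
  have hm : m.IsMaximal := hm
  exact ⟨hm.isPrime, ⟨(IsLocalRing.eq_maximalIdeal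
    (Ideal.isMaximal_comap_of_isIntegral_of_isMaximal m)).symm⟩⟩

theorem stmt_7 {L F : Type*} [Field L] [Field F] [Algebra L F]
    [FiniteDimensional L F] [IsGalois L F]
    (R : ValuationSubring L) [Algebra R F] [IsScalarTower R L F] :
    {m : Ideal (integralClosure R F) | m.IsMaximal}.Finite := by
  set B := integralClosure R F
  have : IsFractionRing B F := integralClosure.isFractionRing_of_finite_extension L F
  have : Algebra.IsInvariant R B (B ≃ₐ[R] B) := Algebra.isInvariant_of_isGalois' R L F B
  have : Finite (B ≃ₐ[R] B) := Finite.of_equiv _ (galRestrict R L F B).toEquiv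
  exact Algebra.IsInvariant.finite_setOf_isMaximal R B (B ≃ₐ[R] B)
end

section
/- Let R be a valuation ring, f(X) ∈ R[X] a monic polynomial, and p a prime ideal of R. Set R[x] = R[X]/(f). Let f̄ = ∏_{i=1}^r f̄_i^{e_i} be the factorization of the reduction f̄ of f modulo p into powers of distinct irreducible polynomials in (R/p)[X]. Then the prime ideals of R[x] lying over p are precisely q_i = (p, f_i(x))R[x] for 1 ≤ i ≤ r; these are pairwise distinct, and R[x]/q_i ≅ (R/p)[X]/(f̄_i). -/
/-!
Primes of `R[x] = R[X]/(f)` over `p` correspond, through `R[X] → (R/p)[X]`, to the primes `P` of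
`(R/p)[X]` that contain `f̄` and meet `R/p` in `0`. As a valuation domain, `R/p` is integrally
closed, so by Gauss's lemma each `f̄ᵢ` (whose leading coefficient is a unit, `f̄` being monic)
generates a prime ideal. Such a `P` contains some `f̄ᵢ`, and incomparability for the integral
extension `(R/p)[X]/(f̄ᵢ)` of `R/p` forces `P = (f̄ᵢ)`.
-/

open Polynomial Ideal

noncomputable def Ideal.quotientComapEquivOfSurjective {S T : Type*} [CommRing S] [CommRing T]
    {φ : S →+* T} (hφ : Function.Surjective φ) (I : Ideal T) : S ⧸ I.comap φ ≃+* T ⧸ I :=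
  (quotEquivOfEq (by rw [← RingHom.comap_ker, mk_ker])).trans
    (RingHom.quotientKerEquivOfSurjective (f := (Ideal.Quotient.mk I).comp φ)
      (Ideal.Quotient.mk_surjective.comp hφ))

theorem AdjoinRoot.ker_mk {R : Type*} [CommRing R] (f : R[X]) :
    RingHom.ker (AdjoinRoot.mk f) = span {f} :=
  mk_ker

namespace Polynomial

theorem exists_monic_associated_of_isUnit_leadingCoeff {A : Type*} [CommRing A] {g : A[X]}
    (hg : IsUnit g.leadingCoeff) :
    ∃ m : A[X], m.Monic ∧ Associated g m :=
  ⟨C ↑hg.unit⁻¹ * g, monic_C_mul_of_mul_leadingCoeff_eq_one (by simp),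
    ⟨(isUnit_C.mpr hg.unit⁻¹.isUnit).unit, by simp [mul_comm]⟩⟩

variable {A : Type*} [CommRing A] [IsDomain A]

theorem Monic.prime_of_irreducible [IsIntegrallyClosed A] {m : A[X]} (hm : m.Monic)
    (hirr : Irreducible m) : Prime m := by
  let K := FractionRing A
  have hdvd (a : A[X]) : m.map (algebraMap A K) ∣ a.map (algebraMap A K) ↔ m ∣ a :=
    map_dvd_map _ (IsFractionRing.injective A K) hm
  have hK : Prime (m.map (algebraMap A K)) :=
    (hm.irreducible_iff_irreducible_map_fraction_map.mp hirr).prime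
  refine ⟨hirr.ne_zero, hirr.not_isUnit, fun a b hab => ?_⟩
  rw [← hdvd, ← hdvd]
  exact hK.dvd_or_dvd (by rw [← Polynomial.map_mul]; exact Polynomial.map_dvd _ hab)

theorem Monic.comap_C_span_singleton_eq_bot {m : A[X]} (hm : m.Monic) (h1 : m ≠ 1) :
    (span {m}).comap C = ⊥ := by
  have hdeg : m.degree ≠ 0 := by
    rwa [degree_eq_natDegree hm.ne_zero, Ne, Nat.cast_eq_zero, hm.natDegree_eq_zero]
  rw [← AdjoinRoot.ker_mk, RingHom.comap_ker, ← RingHom.injective_iff_ker_eq_bot]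
  exact AdjoinRoot.of.injective_of_degree_ne_zero hdeg

/-- Incomparability for the integral extension `A ⊆ A[X]/(m)`. -/
theorem Monic.eq_span_singleton_of_isPrime {m : A[X]} (hm : m.Monic) [(span {m}).IsPrime]
    {P : Ideal A[X]} (hP : P.comap C = ⊥) (hmP : m ∈ P) : P = span {m} := by
  have : IsDomain (AdjoinRoot m) := Quotient.isDomain _
  have : Module.Finite A (AdjoinRoot m) := (AdjoinRoot.powerBasis' hm).finite
  have hle : span {m} ≤ P := span_le.mpr (by simpa using hmP)
  have hbot : P.map (AdjoinRoot.mk m) = ⊥ := by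
    refine eq_bot_of_comap_eq_bot (R := A) ?_
    rw [AdjoinRoot.algebraMap_eq, AdjoinRoot.of, ← comap_comap,
      comap_map_of_surjective' _ AdjoinRoot.mk_surjective, AdjoinRoot.ker_mk,
      sup_eq_left.mpr hle, hP]
  rw [map_eq_bot_iff_le_ker, AdjoinRoot.ker_mk] at hbot
  exact le_antisymm hbot hle

theorem comap_C_span_singleton_eq_bot_of_irreducible {g : A[X]} (hg : IsUnit g.leadingCoeff)
    (hirr : Irreducible g) : (span {g}).comap C = ⊥ := by
  obtain ⟨m, hm, hgm⟩ := exists_monic_associated_of_isUnit_leadingCoeff hg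
  rw [span_singleton_eq_span_singleton.mpr hgm]
  exact hm.comap_C_span_singleton_eq_bot (hgm.irreducible hirr).ne_one

variable [IsIntegrallyClosed A]

theorem isPrime_span_singleton_of_irreducible {g : A[X]} (hg : IsUnit g.leadingCoeff)
    (hirr : Irreducible g) : (span {g}).IsPrime := by
  obtain ⟨m, hm, hgm⟩ := exists_monic_associated_of_isUnit_leadingCoeff hg
  rw [span_singleton_eq_span_singleton.mpr hgm,
    span_singleton_prime (hgm.irreducible hirr).ne_zero]
  exact hm.prime_of_irreducible (hgm.irreducible hirr)

theorem eq_span_singleton_of_irreducible_mem {g : A[X]} (hg : IsUnit g.leadingCoeff)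
    (hirr : Irreducible g) {P : Ideal A[X]} (hP : P.comap C = ⊥) (hgP : g ∈ P) :
    P = span {g} := by
  obtain ⟨m, hm, hgm⟩ := exists_monic_associated_of_isUnit_leadingCoeff hg
  have := isPrime_span_singleton_of_irreducible hg hirr
  rw [span_singleton_eq_span_singleton.mpr hgm] at this ⊢
  obtain ⟨u, rfl⟩ := hgm
  exact hm.eq_span_singleton_of_isPrime hP (P.mul_mem_right _ hgP)

theorem exists_eq_span_singleton_of_prod_pow_mem {ι : Type*} {s : Finset ι} {g : ι → A[X]}
    (e : ι → ℕ) (hg : ∀ i, IsUnit (g i).leadingCoeff) (hirr : ∀ i, Irreducible (g i))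
    {P : Ideal A[X]} [hPprime : P.IsPrime] (hP : P.comap C = ⊥) (hmem : ∏ i ∈ s, g i ^ e i ∈ P) :
    ∃ i ∈ s, P = span {g i} := by
  obtain ⟨i, hi, hpow⟩ := IsPrime.prod_mem_iff.mp hmem
  exact ⟨i, hi, eq_span_singleton_of_irreducible_mem (hg i) (hirr i) hP
    (hPprime.mem_of_pow_mem _ hpow)⟩

end Polynomial

namespace AdjoinRoot

variable {R : Type*} [CommRing R] (p : Ideal R) (f : R[X])

/-- For `P = (f̄ᵢ)` this is the ideal `qᵢ = (p, fᵢ(x))` of `R[x] = R[X]/(f)`. -/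
noncomputable def liftIdeal (P : Ideal (R ⧸ p)[X]) : Ideal (AdjoinRoot f) :=
  (P.comap (mapRingHom (Ideal.Quotient.mk p))).map (mk f)

theorem mapRingHom_mk_surjective : Function.Surjective (mapRingHom (Ideal.Quotient.mk p)) :=
  map_surjective _ Ideal.Quotient.mk_surjective

theorem comap_mapRingHom_mk_span_singleton (h : R[X]) :
    (span {h.map (Ideal.Quotient.mk p)}).comap (mapRingHom (Ideal.Quotient.mk p)) =
      span {h} ⊔ p.map C := by
  rw [← coe_mapRingHom, ← Set.image_singleton, ← map_span,
    comap_map_of_surjective' _ (mapRingHom_mk_surjective p), ker_mapRingHom, mk_ker]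

theorem sup_span_aeval_root_eq_liftIdeal (h : R[X]) :
    p.map (algebraMap R (AdjoinRoot f)) ⊔ span {aeval (root f) h} =
      liftIdeal p f (span {h.map (Ideal.Quotient.mk p)}) := by
  rw [liftIdeal, comap_mapRingHom_mk_span_singleton, Ideal.map_sup, map_span, Set.image_singleton,
    Ideal.map_map, aeval_eq, sup_comm]
  rfl

variable {p f} {P : Ideal (R ⧸ p)[X]}

theorem ker_mk_le_comap (hfP : f.map (Ideal.Quotient.mk p) ∈ P) :
    RingHom.ker (mk f) ≤ P.comap (mapRingHom (Ideal.Quotient.mk p)) := by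
  rwa [ker_mk, span_le, Set.singleton_subset_iff]

theorem comap_mk_liftIdeal (hfP : f.map (Ideal.Quotient.mk p) ∈ P) :
    (liftIdeal p f P).comap (mk f) = P.comap (mapRingHom (Ideal.Quotient.mk p)) := by
  rw [liftIdeal, comap_map_of_surjective' _ mk_surjective, sup_eq_left.mpr (ker_mk_le_comap hfP)]

theorem isPrime_liftIdeal [P.IsPrime] (hfP : f.map (Ideal.Quotient.mk p) ∈ P) :
    (liftIdeal p f P).IsPrime :=
  map_isPrime_of_surjective mk_surjective (ker_mk_le_comap hfP)

theorem comap_C_comap_mapRingHom_mk (P : Ideal (R ⧸ p)[X]) :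
    (P.comap (mapRingHom (Ideal.Quotient.mk p))).comap C =
      (P.comap C).comap (Ideal.Quotient.mk p) := by
  rw [comap_comap, comap_comap, mapRingHom_comp_C]

theorem comap_algebraMap_liftIdeal (hfP : f.map (Ideal.Quotient.mk p) ∈ P) (hP : P.comap C = ⊥) :
    (liftIdeal p f P).comap (algebraMap R (AdjoinRoot f)) = p := by
  rw [algebraMap_eq, of, ← comap_comap, comap_mk_liftIdeal hfP, comap_C_comap_mapRingHom_mk, hP,
    ← RingHom.ker_eq_comap_bot, mk_ker]

theorem liftIdeal_inj {P' : Ideal (R ⧸ p)[X]} (hfP : f.map (Ideal.Quotient.mk p) ∈ P)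
    (hfP' : f.map (Ideal.Quotient.mk p) ∈ P') (h : liftIdeal p f P = liftIdeal p f P') :
    P = P' := by
  apply comap_injective_of_surjective _ (mapRingHom_mk_surjective p)
  rw [← comap_mk_liftIdeal hfP, ← comap_mk_liftIdeal hfP', h]

theorem exists_eq_liftIdeal (q : Ideal (AdjoinRoot f)) [q.IsPrime]
    (hq : q.comap (algebraMap R (AdjoinRoot f)) = p) :
    ∃ P : Ideal (R ⧸ p)[X], P.IsPrime ∧ f.map (Ideal.Quotient.mk p) ∈ P ∧ P.comap C = ⊥ ∧
      q = liftIdeal p f P := by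
  set σ := mapRingHom (Ideal.Quotient.mk p)
  set T := q.comap (mk f)
  have hTC : T.comap C = p := by rw [comap_comap, ← hq, algebraMap_eq]; rfl
  have hkerT : RingHom.ker σ ≤ T := by
    rw [ker_mapRingHom, mk_ker, map_le_iff_le_comap, hTC]
  have hT : (T.map σ).comap σ = T := by
    rw [comap_map_of_surjective' _ (mapRingHom_mk_surjective p), sup_eq_left.mpr hkerT]
  refine ⟨T.map σ, map_isPrime_of_surjective (mapRingHom_mk_surjective p) hkerT,
    mem_map_of_mem σ (show mk f f ∈ q by rw [mk_self]; exact q.zero_mem), ?_, ?_⟩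
  · apply comap_injective_of_surjective _ (Ideal.Quotient.mk_surjective (I := p))
    rw [← comap_C_comap_mapRingHom_mk, hT, hTC, ← RingHom.ker_eq_comap_bot, mk_ker]
  · rw [liftIdeal, hT, map_comap_of_surjective _ mk_surjective]

noncomputable def quotientLiftIdealEquiv (hfP : f.map (Ideal.Quotient.mk p) ∈ P) :
    AdjoinRoot f ⧸ liftIdeal p f P ≃+* (R ⧸ p)[X] ⧸ P :=
  (quotientComapEquivOfSurjective mk_surjective _).symm.trans <|
    (quotEquivOfEq (comap_mk_liftIdeal hfP)).trans <|
      quotientComapEquivOfSurjective (mapRingHom_mk_surjective p) P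

end AdjoinRoot

theorem stmt_8 {R : Type*} [CommRing R] [IsDomain R] [ValuationRing R]
    (f : Polynomial R) (hf : f.Monic) (p : Ideal R) [p.IsPrime]
    (r : ℕ) (fi : Fin r → Polynomial R) (e : Fin r → ℕ)
    (he : ∀ i, 0 < e i)
    (hirr : ∀ i, Irreducible ((fi i).map (Ideal.Quotient.mk p)))
    (hdist : ∀ i j, i ≠ j →
      ¬ Associated ((fi i).map (Ideal.Quotient.mk p)) ((fi j).map (Ideal.Quotient.mk p)))
    (hfact : f.map (Ideal.Quotient.mk p) =
      ∏ i, ((fi i).map (Ideal.Quotient.mk p)) ^ e i)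
    (Q : Fin r → Ideal (AdjoinRoot f))
    (hQ : ∀ i, Q i = p.map (algebraMap R (AdjoinRoot f)) ⊔
      Ideal.span {Polynomial.aeval (AdjoinRoot.root f) (fi i)}) :
    (∀ i, (Q i).IsPrime ∧ (Q i).comap (algebraMap R (AdjoinRoot f)) = p) ∧
    (∀ q : Ideal (AdjoinRoot f), q.IsPrime →
      q.comap (algebraMap R (AdjoinRoot f)) = p → ∃ i, q = Q i) ∧
    (∀ i j, i ≠ j → Q i ≠ Q j) ∧
    (∀ i, Nonempty ((AdjoinRoot f ⧸ Q i) ≃+*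
      (Polynomial (R ⧸ p) ⧸ Ideal.span {(fi i).map (Ideal.Quotient.mk p)}))) := by
  have : ValuationRing (R ⧸ p) := Ideal.Quotient.mk_surjective.valuationRing (Ideal.Quotient.mk p)
  have : IsIntegrallyClosed (R ⧸ p) := GCDMonoid.toIsIntegrallyClosed
  set g := fun i => (fi i).map (Ideal.Quotient.mk p)
  have hdvd (i : Fin r) : g i ∣ ∏ j, g j ^ e j :=
    (dvd_pow_self _ (he i).ne').trans (Finset.dvd_prod_of_mem _ (Finset.mem_univ i))
  have hlc (i : Fin r) : IsUnit (g i).leadingCoeff :=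
    (hfact ▸ hf.map _ : (∏ j, g j ^ e j).Monic).isUnit_leadingCoeff_of_dvd (hdvd i)
  have hfg (i : Fin r) : f.map (Ideal.Quotient.mk p) ∈ span {g i} :=
    mem_span_singleton.mpr (hfact ▸ hdvd i)
  obtain rfl : Q = fun i => AdjoinRoot.liftIdeal p f (span {g i}) :=
    funext fun i => (hQ i).trans (AdjoinRoot.sup_span_aeval_root_eq_liftIdeal p f (fi i))
  refine ⟨fun i => ?_, fun q hq hqp => ?_, fun i j hij h => ?_, fun i => ?_⟩
  · have := isPrime_span_singleton_of_irreducible (hlc i) (hirr i)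
    exact ⟨AdjoinRoot.isPrime_liftIdeal (hfg i), AdjoinRoot.comap_algebraMap_liftIdeal (hfg i)
      (comap_C_span_singleton_eq_bot_of_irreducible (hlc i) (hirr i))⟩
  · obtain ⟨P, hP, hfP, hPC, rfl⟩ := AdjoinRoot.exists_eq_liftIdeal q hqp
    obtain ⟨i, -, rfl⟩ := exists_eq_span_singleton_of_prod_pow_mem e hlc hirr hPC (hfact ▸ hfP)
    exact ⟨i, rfl⟩
  · exact hdist i j hij
      (span_singleton_eq_span_singleton.mp (AdjoinRoot.liftIdeal_inj (hfg i) (hfg j) h))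
  · exact ⟨AdjoinRoot.quotientLiftIdealEquiv (hfg i)⟩
end

section
/- Let A ⊆ B be an extension of commutative rings with 1 and let b ∈ B be a unit of B that is a henselian element over A. Then b^{-1} is also a henselian element over A. -/
/-!
With `N = natDegree h`, take the reversed polynomial `g X = X ^ (N + 1) * h (1 / X)`. Then
`g (1 / b) = 0`, and differentiating gives `X * g' X + X ^ N * h' (1 / X) = (N + 1) * g X`, so at
`c = 1 / b` we get `c * g' c = -c ^ N * h' b`, a unit.
-/

open Polynomial

theorem Polynomial.reflect_derivative_add_X_mul_derivative_reflect {R : Type*} [Semiring R]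
    {N : ℕ} {f : R[X]} (hf : f.natDegree ≤ N + 1) :
    reflect N (derivative f) + X * derivative (reflect (N + 1) f) =
      reflect (N + 1) f * ((N + 1 : ℕ) : R[X]) := by
  ext k
  rcases k with _ | m
  · simp [coeff_reflect, coeff_derivative]
  simp only [coeff_add, coeff_mul_natCast, coeff_X_mul, coeff_reflect, coeff_derivative]
  rcases lt_trichotomy m N with hm | rfl | hm
  · obtain ⟨j, rfl⟩ : ∃ j, N = m + 1 + j := ⟨N - (m + 1), by omega⟩
    rw [revAt_le (by omega), revAt_le (by omega), show m + 1 + j - (m + 1) = j by omega,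
      show m + 1 + j + 1 - (m + 1) = j + 1 by omega, ← mul_add]
    push_cast
    congr 1
    abel
  · rw [revAt_eq_self_of_lt (by omega), revAt_le le_rfl, Nat.sub_self,
      coeff_eq_zero_of_natDegree_lt (by omega)]
    simp
  · rw [revAt_eq_self_of_lt (by omega), revAt_eq_self_of_lt (by omega),
      coeff_eq_zero_of_natDegree_lt (by omega), coeff_eq_zero_of_natDegree_lt (by omega)]
    simp

section Henselian

variable {A B : Type*} [CommSemiring A] [CommRing B] [Algebra A B] {b c : B}

theorem Polynomial.aeval_reflect_mul_pow_of_mul_eq_one (hbc : b * c = 1) {N : ℕ} {f : A[X]}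
    (hf : f.natDegree ≤ N) : aeval c (reflect N f) * b ^ N = aeval b f := by
  let := invertibleOfRightInverse b c hbc
  exact eval₂_reflect_mul_pow (algebraMap A B) b N f hf

theorem Polynomial.aeval_reflect_eq_zero_of_mul_eq_one (hbc : b * c = 1) {N : ℕ} {f : A[X]}
    (hf : f.natDegree ≤ N) (hfb : aeval b f = 0) : aeval c (reflect N f) = 0 := by
  rw [← ((IsUnit.of_mul_eq_one c hbc).pow N).mul_left_eq_zero,
    aeval_reflect_mul_pow_of_mul_eq_one hbc hf, hfb]

theorem Polynomial.isUnit_aeval_derivative_reflect_of_mul_eq_one (hbc : b * c = 1) {f : A[X]}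
    (hfb : aeval b f = 0) (hfb' : IsUnit (aeval b (derivative f))) :
    IsUnit (aeval c (derivative (reflect (f.natDegree + 1) f))) := by
  set N := f.natDegree
  have hdeg : (derivative f).natDegree ≤ N := (natDegree_derivative_le f).trans tsub_le_self
  have hreflect : IsUnit (aeval c (reflect N (derivative f))) :=
    isUnit_of_mul_isUnit_left (by rwa [aeval_reflect_mul_pow_of_mul_eq_one hbc hdeg])
  have key := congrArg (aeval c) (reflect_derivative_add_X_mul_derivative_reflect (Nat.le_succ N))
  rw [map_add, map_mul, map_mul, aeval_X,
    aeval_reflect_eq_zero_of_mul_eq_one hbc (Nat.le_succ _) hfb, zero_mul] at key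
  refine isUnit_of_mul_isUnit_right (x := c) ?_
  rw [eq_neg_of_add_eq_zero_right key]
  exact hreflect.neg

end Henselian

theorem stmt_9_general {A B : Type*} [CommRing A] [CommRing B] [Algebra A B]
    (b c : B) (hbc : b * c = 1)
    (hhens : ∃ h : Polynomial A, Polynomial.aeval b h = 0 ∧
      IsUnit (Polynomial.aeval b (Polynomial.derivative h))) :
    ∃ g : Polynomial A, Polynomial.aeval c g = 0 ∧
      IsUnit (Polynomial.aeval c (Polynomial.derivative g)) := by
  obtain ⟨h, hb, hb'⟩ := hhens
  exact ⟨reflect (h.natDegree + 1) h,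
    aeval_reflect_eq_zero_of_mul_eq_one hbc (Nat.le_succ _) hb,
    isUnit_aeval_derivative_reflect_of_mul_eq_one hbc hb hb'⟩

theorem stmt_9 {A B : Type*} [CommRing A] [CommRing B] [Algebra A B]
    (hinj : Function.Injective (algebraMap A B))
    (b c : B) (hbc : b * c = 1)
    (hhens : ∃ h : Polynomial A, Polynomial.aeval b h = 0 ∧
      IsUnit (Polynomial.aeval b (Polynomial.derivative h))) :
    ∃ g : Polynomial A, Polynomial.aeval c g = 0 ∧
      IsUnit (Polynomial.aeval c (Polynomial.derivative g)) :=
  stmt_9_general b c hbc hhens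
end

section
/- Let R ⊆ S be an integral extension of domains such that the induced extension K ⊆ L of fraction fields is purely inseparable, and assume R = K ∩ S. Then the restriction map Spec(S) → Spec(R), Q ↦ Q ∩ R, is an isomorphism of partially ordered sets; in particular, over every prime P of R lies exactly one prime of S, namely the radical of PS. -/
/-!
Since `K ⊆ L` is purely inseparable, every `s ∈ S` has a power `s ^ q ^ n` lying in `K`, hence in
`K ∩ S = R`. Consequently a radical ideal `Q` of `S` is recovered from its contraction as
`Q = √((Q ∩ R) S)`, so contraction is an order embedding on prime ideals, and lying over for the
integral extension `R ⊆ S` makes it surjective.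
-/

namespace Ideal

variable {R S : Type*} [CommRing R] [CommRing S] [Algebra R S]

theorem radical_map_comap_eq_of_forall_pow_mem_range
    (hpow : ∀ s : S, ∃ n ≠ 0, s ^ n ∈ (algebraMap R S).range) {Q : Ideal S} (hQ : Q.IsRadical) :
    ((Q.comap (algebraMap R S)).map (algebraMap R S)).radical = Q := by
  refine le_antisymm (hQ.radical_le_iff.2 map_comap_le) fun s hs => ?_
  obtain ⟨n, hn, r, hr⟩ := hpow s
  have hrQ : r ∈ Q.comap (algebraMap R S) := by
    rw [mem_comap, hr]
    exact Q.pow_mem_of_mem hs n (Nat.pos_of_ne_zero hn)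
  exact ⟨n, hr ▸ mem_map_of_mem _ hrQ⟩

theorem comap_le_comap_iff_of_forall_pow_mem_range
    (hpow : ∀ s : S, ∃ n ≠ 0, s ^ n ∈ (algebraMap R S).range) {Q₁ Q₂ : Ideal S}
    (h₁ : Q₁.IsRadical) (h₂ : Q₂.IsRadical) :
    Q₁.comap (algebraMap R S) ≤ Q₂.comap (algebraMap R S) ↔ Q₁ ≤ Q₂ := by
  refine ⟨fun h => ?_, comap_mono⟩
  rw [← radical_map_comap_eq_of_forall_pow_mem_range hpow h₁,
    ← radical_map_comap_eq_of_forall_pow_mem_range hpow h₂]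
  exact radical_mono (map_mono h)

def primeComapOrderEmbedding (hpow : ∀ s : S, ∃ n ≠ 0, s ^ n ∈ (algebraMap R S).range) :
    {Q : Ideal S // Q.IsPrime} ↪o {P : Ideal R // P.IsPrime} :=
  OrderEmbedding.ofMapLEIff (fun Q => ⟨Q.1.comap (algebraMap R S), Q.2.comap _⟩) fun Q₁ Q₂ =>
    comap_le_comap_iff_of_forall_pow_mem_range hpow Q₁.2.isRadical Q₂.2.isRadical

theorem exists_isPrime_comap_eq_of_injective [Algebra.IsIntegral R S]
    (hinj : Function.Injective (algebraMap R S)) (P : Ideal R) [P.IsPrime] :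
    ∃ Q : Ideal S, Q.IsPrime ∧ Q.comap (algebraMap R S) = P := by
  obtain ⟨Q, -, hQ, hQP⟩ := exists_ideal_over_prime_of_isIntegral P (⊥ : Ideal S)
    (by rw [← RingHom.ker_eq_comap_bot, (RingHom.injective_iff_ker_eq_bot _).1 hinj]; exact bot_le)
  exact ⟨Q, hQ, hQP⟩

end Ideal

theorem exists_pow_mem_range_of_isPurelyInseparable {R S : Type*} (K L : Type*) [CommRing R]
    [CommRing S] [Algebra R S] [Field K] [Field L] [Algebra S L] [Algebra K L]
    [IsPurelyInseparable K L]
    (hRKS : ∀ x : S, (∃ k : K, algebraMap K L k = algebraMap S L x) →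
      ∃ r : R, algebraMap R S r = x) (s : S) :
    ∃ n ≠ 0, s ^ n ∈ (algebraMap R S).range := by
  have := ringExpChar.expChar K
  obtain ⟨n, k, hk⟩ := IsPurelyInseparable.pow_mem K (ringExpChar K) (algebraMap S L s)
  refine ⟨ringExpChar K ^ n, (pow_pos (expChar_pos K _) n).ne', hRKS _ ⟨k, ?_⟩⟩
  rw [hk, map_pow]

theorem stmt_13_general {R S K L : Type*} [CommRing R] [CommRing S]
    [Algebra R S] [Algebra.IsIntegral R S]
    [Field K] [Algebra R K] [IsFractionRing R K]
    [Field L] [Algebra S L]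
    [Algebra K L] [IsPurelyInseparable K L]
    [Algebra R L] [IsScalarTower R S L] [IsScalarTower R K L]
    (hRKS : ∀ x : S, (∃ k : K, algebraMap K L k = algebraMap S L x) →
      ∃ r : R, algebraMap R S r = x) :
    (∃ e : {Q : Ideal S // Q.IsPrime} ≃o {P : Ideal R // P.IsPrime},
      ∀ Q : {Q : Ideal S // Q.IsPrime},
        (e Q : Ideal R) = (Q : Ideal S).comap (algebraMap R S)) ∧
    ∀ P : Ideal R, P.IsPrime →
      (∃! Q : Ideal S, Q.IsPrime ∧ Q.comap (algebraMap R S) = P) ∧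
      (P.map (algebraMap R S)).radical.IsPrime ∧
      (P.map (algebraMap R S)).radical.comap (algebraMap R S) = P := by
  have hpow := exists_pow_mem_range_of_isPurelyInseparable (R := R) K L hRKS
  have hinj : Function.Injective (algebraMap R S) := by
    refine Function.Injective.of_comp (f := algebraMap S L) ?_
    rw [← RingHom.coe_comp, ← IsScalarTower.algebraMap_eq, IsScalarTower.algebraMap_eq R K L,
      RingHom.coe_comp]
    exact (algebraMap K L).injective.comp (IsFractionRing.injective R K)
  have lies_over (P : Ideal R) (hP : P.IsPrime) := Ideal.exists_isPrime_comap_eq_of_injective hinj P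
  refine ⟨⟨OrderIso.ofSurjective (Ideal.primeComapOrderEmbedding hpow) fun P => ?_, fun _ => rfl⟩,
    fun P hP => ?_⟩
  · obtain ⟨Q, hQ, hQP⟩ := lies_over P.1 P.2
    exact ⟨⟨Q, hQ⟩, Subtype.ext hQP⟩
  obtain ⟨Q, hQ, rfl⟩ := lies_over P hP
  have hrad := Ideal.radical_map_comap_eq_of_forall_pow_mem_range hpow hQ.isRadical
  rw [hrad]
  refine ⟨⟨Q, ⟨hQ, rfl⟩, fun Q' ⟨hQ', hQ'Q⟩ => ?_⟩, hQ, rfl⟩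
  rw [← Ideal.radical_map_comap_eq_of_forall_pow_mem_range hpow hQ'.isRadical, hQ'Q, hrad]

theorem stmt_13 {R S K L : Type*} [CommRing R] [IsDomain R] [CommRing S] [IsDomain S]
    [Algebra R S] [Algebra.IsIntegral R S]
    [Field K] [Algebra R K] [IsFractionRing R K]
    [Field L] [Algebra S L] [IsFractionRing S L]
    [Algebra K L] [IsPurelyInseparable K L]
    [Algebra R L] [IsScalarTower R S L] [IsScalarTower R K L]
    (hRKS : ∀ x : S, (∃ k : K, algebraMap K L k = algebraMap S L x) →
      ∃ r : R, algebraMap R S r = x) :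
    (∃ e : {Q : Ideal S // Q.IsPrime} ≃o {P : Ideal R // P.IsPrime},
      ∀ Q : {Q : Ideal S // Q.IsPrime},
        (e Q : Ideal R) = (Q : Ideal S).comap (algebraMap R S)) ∧
    ∀ P : Ideal R, P.IsPrime →
      (∃! Q : Ideal S, Q.IsPrime ∧ Q.comap (algebraMap R S) = P) ∧
      (P.map (algebraMap R S)).radical.IsPrime ∧
      (P.map (algebraMap R S)).radical.comap (algebraMap R S) = P :=
  stmt_13_general hRKS
end

section
/- Let R be a domain with fraction field K. For every chain C of prime ideals of R there exists a valuation ring O of K containing R and a chain C_O of prime ideals of O such that the restriction of C_O to R equals C, i.e., { P ∩ R : P ∈ C_O } = C. -/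
/-!
A valuation ring `W ⊇ R` of `K` with `𝔪_W ∩ R ⊆ P`, `P` prime, can be shrunk to a valuation
ring `W' ⊆ W` with `𝔪_W' ∩ R = P`: take a valuation ring dominating the localization of
`R + 𝔪_W` at its prime `P + 𝔪_W`; it lies in `W` because `x ∉ W` forces `x⁻¹ ∈ 𝔪_W`.
Running through a finite chain from its smallest prime upwards gives a decreasing sequence of
valuation rings; the last one is `O`, and the earlier ones are overrings of `O` whose maximal
ideals give primes of `O` lying over the chain. For an arbitrary chain, take the ultralimit of
these finite solutions along an ultrafilter on the finite subchains that eventually contains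
every prime: ultralimits of valuation rings are valuation rings, and `𝔪_W ∩ R = P` passes to
the limit. Any set of primes of a valuation ring is a chain.
-/

open Filter

namespace ValuationSubring

variable {K : Type*} [Field K]

theorem mul_mem_nonunits {A : ValuationSubring K} {a x : K} (ha : a ∈ A)
    (hx : x ∈ A.nonunits) : a * x ∈ A.nonunits := by
  rw [mem_nonunits_iff, map_mul]
  exact (mul_le_of_le_one_left' ((A.valuation_le_one_iff a).mpr ha)).trans_lt hx

theorem mem_idealOfLE_iff {A B : ValuationSubring K} (h : A ≤ B) {a : A} :
    a ∈ A.idealOfLE B h ↔ (a : K) ∈ B.nonunits :=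
  coe_mem_nonunits_iff.symm

section Ultralimit

variable {ι : Type*} (U : Ultrafilter ι) (W : ι → ValuationSubring K)

def ultralimit : ValuationSubring K where
  carrier := {x | ∀ᶠ i in U, x ∈ W i}
  mul_mem' ha hb := (ha.and hb).mono fun i h => (W i).mul_mem _ _ h.1 h.2
  one_mem' := .of_forall fun i => (W i).one_mem
  add_mem' ha hb := (ha.and hb).mono fun i h => (W i).add_mem _ _ h.1 h.2
  zero_mem' := .of_forall fun i => (W i).zero_mem
  neg_mem' ha := ha.mono fun i h => (W i).neg_mem _ h
  mem_or_inv_mem' x := U.eventually_or.mp (.of_forall fun i => (W i).mem_or_inv_mem x)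

variable {U W}

theorem mem_ultralimit {x : K} : x ∈ ultralimit U W ↔ ∀ᶠ i in U, x ∈ W i := Iff.rfl

theorem ultralimit_mono {W' : ι → ValuationSubring K} (h : ∀ᶠ i in U, W i ≤ W' i) :
    ultralimit U W ≤ ultralimit U W' :=
  fun _ hx => (hx.and h).mono fun _ hi => hi.2 hi.1

theorem mem_nonunits_ultralimit {x : K} :
    x ∈ (ultralimit U W).nonunits ↔ ∀ᶠ i in U, x ∈ (W i).nonunits := by
  simp only [mem_nonunits_iff_or, mem_ultralimit, U.eventually_or, U.eventually_not,
    eventually_const]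

end Ultralimit

end ValuationSubring

theorem Ideal.exists_valuationSubring_nonunits_inter_eq {K : Type*} [Field K] {A : Subring K}
    (Q : Ideal A) [Q.IsPrime] :
    ∃ V : ValuationSubring K, A ≤ V.toSubring ∧ ∀ a : A, (a : K) ∈ V.nonunits ↔ a ∈ Q := by
  obtain ⟨V, hle, hloc⟩ := (LocalSubring.ofPrime A Q).exists_le_valuationSubring
  refine ⟨V, (LocalSubring.le_ofPrime A Q).trans hle, fun a => ?_⟩
  rw [← IsLocalization.AtPrime.to_map_mem_maximal_iff (LocalSubring.ofPrime A Q).toSubring Q a,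
    ← IsLocalRing.maximalIdeal_comap (Subring.inclusion hle)]
  exact V.coe_mem_nonunits_iff (a := ⟨a, (LocalSubring.le_ofPrime A Q).trans hle a.2⟩)

namespace ValuationSubring

variable {R K : Type*} [CommRing R] [Field K] [Algebra R K]

theorem mul_sub_algebraMap_mul_mem_nonunits (W : ValuationSubring K)
    (hRW : ∀ r : R, algebraMap R K r ∈ W)
    {x y : K} {r s : R} (hx : x - algebraMap R K r ∈ W.nonunits)
    (hy : y - algebraMap R K s ∈ W.nonunits) :
    x * y - algebraMap R K (r * s) ∈ W.nonunits := by
  have h := W.nonunits.add_mem (W.nonunits.add_mem (W.nonunits.mul_mem hx hy)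
    (W.mul_mem_nonunits (hRW r) hy)) (W.mul_mem_nonunits (hRW s) hx)
  convert h using 1
  rw [map_mul]
  ring

def addNonunits (W : ValuationSubring K) (hRW : ∀ r : R, algebraMap R K r ∈ W) :
    Subring K where
  carrier := {x | ∃ r : R, x - algebraMap R K r ∈ W.nonunits}
  mul_mem' := fun ⟨r, hr⟩ ⟨s, hs⟩ => ⟨r * s, W.mul_sub_algebraMap_mul_mem_nonunits hRW hr hs⟩
  one_mem' := ⟨1, by simp⟩
  add_mem' := fun ⟨r, hr⟩ ⟨s, hs⟩ => ⟨r + s, by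
    rw [map_add, add_sub_add_comm]; exact W.nonunits.add_mem hr hs⟩
  zero_mem' := ⟨0, by simp⟩
  neg_mem' := fun ⟨r, hr⟩ => ⟨-r, by
    rw [map_neg, neg_sub_neg, ← neg_sub]; exact W.nonunits.neg_mem hr⟩

theorem algebraMap_mem_addNonunits (W : ValuationSubring K)
    (hRW : ∀ r : R, algebraMap R K r ∈ W) (r : R) : algebraMap R K r ∈ W.addNonunits hRW :=
  ⟨r, by simp⟩

theorem nonunits_subset_addNonunits (W : ValuationSubring K)
    (hRW : ∀ r : R, algebraMap R K r ∈ W) : (W.nonunits : Set K) ⊆ W.addNonunits hRW :=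
  fun x hx => ⟨0, by simpa using hx⟩

def addNonunitsIdeal {W : ValuationSubring K} {hRW : ∀ r : R, algebraMap R K r ∈ W}
    (P : Ideal R) : Ideal (W.addNonunits hRW) where
  carrier := {x | ∃ p ∈ P, (x : K) - algebraMap R K p ∈ W.nonunits}
  add_mem' := fun ⟨p, hp, hxp⟩ ⟨q, hq, hyq⟩ => ⟨p + q, P.add_mem hp hq, by
    rw [Subring.coe_add, map_add, add_sub_add_comm]; exact W.nonunits.add_mem hxp hyq⟩
  zero_mem' := ⟨0, P.zero_mem, by simp⟩
  smul_mem' := fun ⟨_, r, hcr⟩ _ ⟨p, hp, hxp⟩ =>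
    ⟨r * p, P.mul_mem_left r hp, W.mul_sub_algebraMap_mul_mem_nonunits hRW hcr hxp⟩

variable {W : ValuationSubring K} {P : Ideal R}

theorem mem_addNonunitsIdeal_iff {hRW : ∀ r : R, algebraMap R K r ∈ W}
    (hWP : algebraMap R K ⁻¹' W.nonunits ⊆ P)
    {x : W.addNonunits hRW} {r : R} (hxr : (x : K) - algebraMap R K r ∈ W.nonunits) :
    x ∈ addNonunitsIdeal P ↔ r ∈ P := by
  refine ⟨fun ⟨p, hp, hxp⟩ => ?_, fun hr => ⟨r, hr, hxr⟩⟩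
  have hrp : r - p ∈ P := hWP <| by
    rw [Set.mem_preimage, map_sub, ← sub_sub_sub_cancel_left _ _ (x : K)]
    exact W.nonunits.sub_mem hxp hxr
  simpa using P.add_mem hrp hp

theorem isPrime_addNonunitsIdeal {hRW : ∀ r : R, algebraMap R K r ∈ W} [hP : P.IsPrime]
    (hWP : algebraMap R K ⁻¹' W.nonunits ⊆ P) :
    (addNonunitsIdeal (hRW := hRW) P).IsPrime := by
  refine ⟨fun htop => ?_, fun {x y} hxy => ?_⟩
  · exact hP.ne_top <| P.eq_top_iff_one.mpr <|
      (mem_addNonunitsIdeal_iff hWP (x := 1) (r := 1) (by simp)).mp (htop ▸ Submodule.mem_top)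
  · obtain ⟨x, r, hxr⟩ := x
    obtain ⟨y, s, hys⟩ := y
    rw [mem_addNonunitsIdeal_iff hWP (W.mul_sub_algebraMap_mul_mem_nonunits hRW hxr hys)] at hxy
    rw [mem_addNonunitsIdeal_iff hWP hxr, mem_addNonunitsIdeal_iff hWP hys]
    exact hP.mem_or_mem hxy

theorem exists_le_preimage_nonunits_eq (hRW : ∀ r : R, algebraMap R K r ∈ W) [P.IsPrime]
    (hWP : algebraMap R K ⁻¹' W.nonunits ⊆ P) :
    ∃ V ≤ W, (∀ r : R, algebraMap R K r ∈ V) ∧ algebraMap R K ⁻¹' V.nonunits = P := by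
  have := isPrime_addNonunitsIdeal (hRW := hRW) hWP
  obtain ⟨V, hTV, hV⟩ :=
    (addNonunitsIdeal (hRW := hRW) P).exists_valuationSubring_nonunits_inter_eq
  refine ⟨V, fun x hxV => ?_, fun r => hTV (W.algebraMap_mem_addNonunits hRW r), ?_⟩
  · by_contra hxW
    have hx : x⁻¹ ∈ W.nonunits := W.inv_mem_nonunits_iff.mpr (.inr hxW)
    have hxQ := (hV ⟨_, W.nonunits_subset_addNonunits hRW hx⟩).mpr
      ⟨0, P.zero_mem, by simpa using hx⟩
    rcases V.inv_mem_nonunits_iff.mp hxQ with rfl | hxV'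
    · exact hxW W.zero_mem
    · exact hxV' hxV
  · ext r
    exact (hV ⟨_, W.algebraMap_mem_addNonunits hRW r⟩).trans
      (mem_addNonunitsIdeal_iff hWP (by simp))

theorem exists_le_forall_preimage_nonunits_eq_of_finset (D : Finset (Ideal R))
    (hD : IsChain (· ≤ ·) (D : Set (Ideal R))) (hDprime : ∀ P ∈ D, P.IsPrime)
    (W : ValuationSubring K) (hRW : ∀ r : R, algebraMap R K r ∈ W)
    (hWD : ∀ P ∈ D, algebraMap R K ⁻¹' W.nonunits ⊆ P) :
    ∃ O ≤ W, (∀ r : R, algebraMap R K r ∈ O) ∧ ∃ V : Ideal R → ValuationSubring K,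
      ∀ P ∈ D, O ≤ V P ∧ algebraMap R K ⁻¹' (V P).nonunits = P := by
  classical
  induction D using Finset.strongInduction generalizing W with
  | H D ih =>
  rcases D.eq_empty_or_nonempty with rfl | hne
  · exact ⟨W, le_rfl, hRW, fun _ => W, by simp⟩
  obtain ⟨P₀, hP₀, hmin⟩ := D.exists_minimal hne
  have hP₀le : ∀ P ∈ D, P₀ ≤ P := fun P hP =>
    (hD.total hP₀ hP).elim id fun h => hmin hP h
  have := hDprime P₀ hP₀
  obtain ⟨W₀, hW₀W, hRW₀, hW₀⟩ := exists_le_preimage_nonunits_eq hRW (hWD P₀ hP₀)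
  obtain ⟨O, hOW₀, hRO, V, hV⟩ := ih (D.erase P₀) (D.erase_ssubset hP₀)
    (hD.mono (D.erase_subset P₀)) (fun P hP => hDprime P (D.mem_of_mem_erase hP)) W₀ hRW₀
    (fun P hP => hW₀.trans_subset (hP₀le P (D.mem_of_mem_erase hP)))
  refine ⟨O, hOW₀.trans hW₀W, hRO, Function.update V P₀ W₀, fun P hP => ?_⟩
  rcases eq_or_ne P P₀ with rfl | hne
  · simpa using ⟨hOW₀, hW₀⟩
  · simpa [hne] using hV P (D.mem_erase.mpr ⟨hne, hP⟩)

theorem exists_forall_preimage_nonunits_eq_of_isChain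
    (hf : Function.Injective (algebraMap R K)) (C : Set (Ideal R))
    (hCprime : ∀ P ∈ C, P.IsPrime) (hC : IsChain (· ≤ ·) C) :
    ∃ O : ValuationSubring K, (∀ r : R, algebraMap R K r ∈ O) ∧
      ∃ V : Ideal R → ValuationSubring K,
        ∀ P ∈ C, O ≤ V P ∧ algebraMap R K ⁻¹' (V P).nonunits = P := by
  have hbot (P : Ideal R) : algebraMap R K ⁻¹' (⊤ : ValuationSubring K).nonunits ⊆ P := by
    intro r hr
    obtain h | h := (mem_nonunits_iff_or _).mp hr
    · simp [hf (h.trans (map_zero _).symm)]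
    · exact absurd (mem_top _) h
  have hfinite (D : Finset C) := exists_le_forall_preimage_nonunits_eq_of_finset
    (D.map (.subtype _)) (hC.mono (by simp)) (by simpa using fun P hP _ => hCprime P hP) ⊤
    (fun _ => mem_top _) (fun P _ => hbot P)
  choose O _ hRO V hV using hfinite
  let U := Ultrafilter.of (atTop : Filter (Finset C))
  have hU (P : C) : ∀ᶠ D : Finset C in U, (P : Ideal R) ∈ D.map (.subtype _) :=
    Ultrafilter.of_le _ <| (eventually_ge_atTop {P}).mono fun _ hD =>
      Finset.mem_map_of_mem _ (hD (Finset.mem_singleton_self P))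
  refine ⟨ultralimit U O, fun r => .of_forall fun D => hRO D r,
    fun P => ultralimit U fun D => V D P, fun P hP => ⟨?_, ?_⟩⟩
  · exact ultralimit_mono ((hU ⟨P, hP⟩).mono fun D hD => (hV D P hD).1)
  · ext r
    have h : ∀ᶠ D : Finset C in U, algebraMap R K r ∈ (V D P).nonunits ↔ r ∈ P :=
      (hU ⟨P, hP⟩).mono fun D hD => Set.ext_iff.mp (hV D P hD).2 r
    simpa only [Set.mem_preimage, SetLike.mem_coe, mem_nonunits_ultralimit,
      eventually_const] using eventually_congr h

end ValuationSubring

theorem stmt_15_general {R K : Type*} [CommRing R] [Field K] [Algebra R K]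
    [IsFractionRing R K] (C : Set (Ideal R))
    (hCprime : ∀ P ∈ C, P.IsPrime) (hC : IsChain (· ≤ ·) C) :
    ∃ (O : ValuationSubring K) (h : ∀ r : R, algebraMap R K r ∈ O.toSubring)
      (CO : Set (Ideal O)),
      (∀ P ∈ CO, P.IsPrime) ∧ IsChain (· ≤ ·) CO ∧
      (Ideal.comap ((algebraMap R K).codRestrict O.toSubring h)) '' CO = C := by
  obtain ⟨O, hRO, V, hV⟩ := ValuationSubring.exists_forall_preimage_nonunits_eq_of_isChain
    (IsFractionRing.injective R K) C hCprime hC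
  have hcomap (P : C) : ((O.idealOfLE (V P) (hV P P.2).1).comap
      ((algebraMap R K).codRestrict O.toSubring hRO)) = P := by
    ext r
    exact (ValuationSubring.mem_idealOfLE_iff _).trans (Set.ext_iff.mp (hV P P.2).2 r)
  refine ⟨O, hRO, Set.range fun P : C => O.idealOfLE (V P) (hV P P.2).1, ?_, ?_, ?_⟩
  · rintro _ ⟨P, rfl⟩
    infer_instance
  · exact fun I _ J _ _ => total_of (· ≤ ·) I J
  · rw [← Set.range_comp, Function.comp_def]
    simp only [hcomap, Subtype.range_coe]

theorem stmt_15 {R K : Type*} [CommRing R] [IsDomain R] [Field K] [Algebra R K]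
    [IsFractionRing R K] (C : Set (Ideal R))
    (hCprime : ∀ P ∈ C, P.IsPrime) (hC : IsChain (· ≤ ·) C) :
    ∃ (O : ValuationSubring K) (h : ∀ r : R, algebraMap R K r ∈ O.toSubring)
      (CO : Set (Ideal O)),
      (∀ P ∈ CO, P.IsPrime) ∧ IsChain (· ≤ ·) CO ∧
      (Ideal.comap ((algebraMap R K).codRestrict O.toSubring h)) '' CO = C :=
  stmt_15_general C hCprime hC
end

section
/- Let R be a local domain with maximal ideal m and fraction field L, let v be a valuation on an algebraic closure of L whose valuation ring dominates R, and let η be a root of a monic polynomial h(X) ∈ R[X] with v(h'(η)) = 0 and v(η) ≥ 0. Then the ring R'/mR', where R' = R[η]_{m_v ∩ R[η]}, is reduced; in particular the localization ((R/m)[X]/(h̄(X)))_q at the prime q corresponding to m_v ∩ R[η] is reduced, where h̄ denotes the reduction of h modulo m. -/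
/-!
Write `A = R[η]`, `P = m_v ∩ A` and `k = R/m`. Since `h(η) = 0`, the ring `A/mA` is a quotient
of `k[X]/(h̄)`, and `P` corresponds to a principal ideal `(p)` of `k[X]` containing `h̄` but not
`h̄'`. Hence `h̄ = p w` with `p ∤ w` (otherwise `p² ∣ h̄` and `p ∣ h̄'`), and `w · P ⊆ mA`.
As `w ∉ P`, it becomes a unit in `A_P`, so `m A_P = P A_P` is the maximal ideal and
`A_P / m A_P` is a field.
-/

open Polynomial IsLocalRing

theorem Polynomial.exists_not_dvd_forall_dvd_mul_of_not_dvd_derivative {R : Type*} [CommRing R]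
    {p g : R[X]} (hg : p ∣ g) (hg' : ¬ p ∣ derivative g) :
    ∃ w, ¬ p ∣ w ∧ ∀ f, p ∣ f → g ∣ w * f := by
  obtain ⟨w, rfl⟩ := hg
  refine ⟨w, fun hw => hg' ?_, fun f ⟨c, hc⟩ => ⟨c, by rw [hc]; ring⟩⟩
  have hsq : p ^ 2 ∣ p * w := by rw [sq]; exact mul_dvd_mul_left p hw
  simpa using pow_sub_one_dvd_derivative_of_pow_dvd hsq

theorem exists_notMem_forall_mul_mem_map_of_derivative_notMem {R A : Type*} [CommRing R]
    [CommRing A] [Algebra R A] {m : Ideal R} [m.IsMaximal] {π : R[X] →ₐ[R] A}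
    (hπ : Function.Surjective π) {P : Ideal A} (hmP : m.map (algebraMap R A) ≤ P) {h : R[X]}
    (hh : π h = 0) (hh' : π (derivative h) ∉ P) :
    ∃ s ∉ P, ∀ x ∈ P, s * x ∈ m.map (algebraMap R A) := by
  let := Ideal.Quotient.field m
  set φ : R[X] →+* (R ⧸ m)[X] := mapRingHom (Ideal.Quotient.mk m)
  have hφ : Function.Surjective φ := map_surjective _ Ideal.Quotient.mk_surjective
  have hker : RingHom.ker φ = m.map (algebraMap R R[X]) := by
    rw [ker_mapRingHom, Ideal.mk_ker, algebraMap_eq]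
  have hπm : (m.map (algebraMap R R[X])).map (π : R[X] →+* A) = m.map (algebraMap R A) := by
    rw [Ideal.map_map, π.comp_algebraMap]
  set Q := P.comap (π : R[X] →+* A)
  have hkerQ : RingHom.ker φ ≤ Q := by
    rw [hker, ← Ideal.map_le_iff_le_comap, hπm]
    exact hmP
  set p := Submodule.IsPrincipal.generator (Q.map φ)
  have hQ : ∀ f, f ∈ Q ↔ p ∣ φ f := fun f => by
    rw [← Ideal.mem_span_singleton, Ideal.span_singleton_generator, ← Ideal.mem_comap,
      Ideal.comap_map_of_surjective' _ hφ, sup_eq_left.mpr hkerQ]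
  have hph : p ∣ φ h := (hQ h).mp (by simp [Q, hh])
  have hph' : ¬ p ∣ derivative (φ h) := by
    rw [coe_mapRingHom, derivative_map, ← coe_mapRingHom, ← hQ]
    exact hh'
  obtain ⟨w, hw, hwP⟩ := exists_not_dvd_forall_dvd_mul_of_not_dvd_derivative hph hph'
  obtain ⟨W, rfl⟩ := hφ w
  refine ⟨π W, fun hW => hw ((hQ W).mp hW), fun x hx => ?_⟩
  obtain ⟨f, rfl⟩ := hπ x
  obtain ⟨c, hc⟩ := hwP _ ((hQ f).mp hx)
  obtain ⟨G, rfl⟩ := hφ c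
  have hWf : W * f - h * G ∈ RingHom.ker φ := by
    rw [RingHom.mem_ker, map_sub, map_mul, map_mul, hc, sub_self]
  have hWf' : π W * π f = π (W * f - h * G) := by simp [hh]
  rw [hWf', ← hπm, ← hker]
  exact Ideal.mem_map_of_mem _ hWf

theorem IsLocalization.map_eq_map_of_forall_mul_mem {A : Type*} [CommRing A] {M : Submonoid A}
    (S : Type*) [CommRing S] [Algebra A S] [IsLocalization M S] {I J : Ideal A} (hIJ : I ≤ J)
    {s : A} (hs : s ∈ M) (hsJ : ∀ x ∈ J, s * x ∈ I) :
    I.map (algebraMap A S) = J.map (algebraMap A S) := by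
  refine le_antisymm (Ideal.map_mono hIJ) (Ideal.map_le_iff_le_comap.mpr fun x hx => ?_)
  rw [Ideal.mem_comap, ← Ideal.unit_mul_mem_iff_mem _ (IsLocalization.map_units S ⟨s, hs⟩),
    ← map_mul]
  exact Ideal.mem_map_of_mem _ (hsJ x hx)

theorem stmt_18_general {R Ω Γ : Type*} [CommRing R] [IsLocalRing R]
    [Field Ω]
    [Algebra R Ω]
    [LinearOrderedCommGroupWithZero Γ] (v : Valuation Ω Γ)
    (hdom₂ : ∀ r : R, v (algebraMap R Ω r) < 1 ↔ r ∈ IsLocalRing.maximalIdeal R)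
    (h : Polynomial R) (η : Ω)
    (hroot : Polynomial.aeval η h = 0)
    (hder : v (Polynomial.aeval η (Polynomial.derivative h)) = 1)
    (P : Ideal (Algebra.adjoin R {η})) [P.IsPrime]
    (hP : ∀ x : Algebra.adjoin R {η}, x ∈ P ↔ v (x : Ω) < 1) :
    IsReduced (Localization.AtPrime P ⧸
      Ideal.map ((algebraMap (Algebra.adjoin R {η}) (Localization.AtPrime P)).comp
        (algebraMap R (Algebra.adjoin R {η}))) (IsLocalRing.maximalIdeal R)) := by
  set π : R[X] →ₐ[R] Algebra.adjoin R {η} := aeval ⟨η, Algebra.self_mem_adjoin_singleton R η⟩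
  have hπ : ∀ f, (π f : Ω) = aeval η f := fun f => aeval_subalgebra_coe f _ _
  have hπsurj : Function.Surjective π := fun a =>
    let ⟨f, hf⟩ := Algebra.adjoin_eq_exists_aeval R η a
    ⟨f, Subtype.ext ((hπ f).trans hf)⟩
  have hmP : (maximalIdeal R).map (algebraMap R _) ≤ P :=
    Ideal.map_le_iff_le_comap.mpr fun r hr => (hP _).mpr ((hdom₂ r).mpr hr)
  obtain ⟨s, hs, hsP⟩ := exists_notMem_forall_mul_mem_map_of_derivative_notMem hπsurj hmP
    (h := h) (Subtype.ext (by rw [hπ, hroot]; rfl))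
    (fun hd => ((hP _).mp hd).ne (by rw [hπ, hder]))
  rw [← Ideal.map_map,
    IsLocalization.map_eq_map_of_forall_mul_mem _ hmP (M := P.primeCompl) hs hsP,
    Localization.AtPrime.map_eq_maximalIdeal]
  infer_instance

theorem stmt_18 {R L Ω Γ : Type*} [CommRing R] [IsDomain R] [IsLocalRing R]
    [Field L] [Algebra R L] [IsFractionRing R L]
    [Field Ω] [Algebra L Ω] [IsAlgClosure L Ω]
    [Algebra R Ω] [IsScalarTower R L Ω]
    [LinearOrderedCommGroupWithZero Γ] (v : Valuation Ω Γ)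
    (hdom₁ : ∀ r : R, v (algebraMap R Ω r) ≤ 1)
    (hdom₂ : ∀ r : R, v (algebraMap R Ω r) < 1 ↔ r ∈ IsLocalRing.maximalIdeal R)
    (h : Polynomial R) (hmonic : h.Monic) (η : Ω)
    (hroot : Polynomial.aeval η h = 0)
    (hη : v η ≤ 1)
    (hder : v (Polynomial.aeval η (Polynomial.derivative h)) = 1)
    (P : Ideal (Algebra.adjoin R {η})) [P.IsPrime]
    (hP : ∀ x : Algebra.adjoin R {η}, x ∈ P ↔ v (x : Ω) < 1) :
    IsReduced (Localization.AtPrime P ⧸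
      Ideal.map ((algebraMap (Algebra.adjoin R {η}) (Localization.AtPrime P)).comp
        (algebraMap R (Algebra.adjoin R {η}))) (IsLocalRing.maximalIdeal R)) :=
  stmt_18_general v hdom₂ h η hroot hder P hP
end
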